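/- If $\mathcal{A}$ is a maximal ideal independent family, then every $C \in \mathcal{A}^+$ (i.e., infinite $C \subseteq \omega$ not almost covered by a finite union of members of $\mathcal{A}$) has an accumulation point in the space $\psi(\mathcal{A})$. Conversely, if all but finitely many of the filters $\mathcal{F}(\mathcal{A}, A)$, $A \in \mathcal{A}$, are ultrafilters and every $C \in \mathcal{A}^+$ has an accumulation point in $\psi(\mathcal{A})$, then $\mathcal{A}$ is maximal. -/

import Mathlib

/-!
Points of `ω` are isolated, so an accumulation point of `C ⊆ ω` is some `a ∈ 𝒜`, and `a` is one
exactly when `C` meets every set of `𝓕(𝒜, a)`. If `C ∈ 𝒜⁺` has no accumulation point, then `Cᶜ`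
belongs to every `𝓕(𝒜, a)`, i.e. `C ∩ a` is covered by finitely many other members of `𝒜`; together
with `C ∈ 𝒜⁺` this makes `𝒜 ∪ {C}` ideal independent, against maximality.

Conversely, take `C` in an ideal independent `𝓑 ⊋ 𝒜` but not in `𝒜`, and remove from it the finitely
many `a ∈ 𝒜` whose filter is not an ultrafilter. The result `D` lies in `𝒜⁺`, so it has an accumulation
point `a`; then `D` is positive for `𝓕(𝒜, a)`, which must be an ultrafilter and therefore contains
`D ⊆ C`. Thus `a ∖ ⋃ 𝓑₀ ⊆ C` for a finite `𝓑₀ ⊆ 𝒜 ∖ {a}`, contradicting the independence of `𝓑`.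
-/

/-- A family of infinite subsets of ω is *ideal independent* if no member is
almost covered by finitely many of the others. -/
def IdealIndependent (A : Set (Set ℕ)) : Prop :=
  (∀ X ∈ A, X.Infinite) ∧
  ∀ X ∈ A, ∀ F : Finset (Set ℕ), ↑F ⊆ A \ {X} → (X \ ⋃ Y ∈ F, Y).Infinite

/-- Maximal ideal independent family: no ideal independent family properly contains it. -/
def MaximalIdealIndependent (A : Set (Set ℕ)) : Prop :=
  IdealIndependent A ∧ ∀ B : Set (Set ℕ), IdealIndependent B → A ⊆ B → B = A

/-- Generating sets of the complemented filter `𝓕(A, X)`. -/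
def genSets (A : Set (Set ℕ)) (X : Set ℕ) : Set (Set ℕ) :=
  {S | ∃ F : Finset (Set ℕ), ↑F ⊆ A \ {X} ∧ S = X \ ⋃ Y ∈ F, Y}

/-- The complemented filter `𝓕(A, X)` generated by the sets `X \ ⋃ 𝓑`,
`𝓑` a finite subset of `A \ {X}`. -/
def complFilter (A : Set (Set ℕ)) (X : Set ℕ) : Filter ℕ :=
  Filter.generate (genSets A X)

/-- The ideal `𝓙(A)` generated by the pairwise intersections of distinct members
of `A` together with the finite sets. -/
def idealJ (A : Set (Set ℕ)) : Set (Set ℕ) :=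
  {X | ∃ F : Finset (Set ℕ × Set ℕ),
    (∀ p ∈ F, p.1 ∈ A ∧ p.2 ∈ A ∧ p.1 ≠ p.2) ∧
    (X \ ⋃ p ∈ F, p.1 ∩ p.2).Finite}

/-- The Mrówka-type topology on `ω ⊕ A`: naturals are isolated and a basic neighborhood
of `A ∈ 𝒜` is `{A} ∪ F` for `F ∈ 𝓕(𝒜, A)`. -/
def psiTop (A : Set (Set ℕ)) : TopologicalSpace (ℕ ⊕ ↥A) where
  IsOpen U := ∀ a : ↥A, Sum.inr a ∈ U → ∃ F ∈ complFilter A a.1, ∀ n ∈ F, Sum.inl n ∈ U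
  isOpen_univ := fun _ _ => ⟨Set.univ, Filter.univ_mem, fun _ _ => trivial⟩
  isOpen_inter := by
    intro U V hU hV a ha
    obtain ⟨F1, hF1, h1⟩ := hU a ha.1
    obtain ⟨F2, hF2, h2⟩ := hV a ha.2
    exact ⟨F1 ∩ F2, Filter.inter_mem hF1 hF2, fun n hn => ⟨h1 n hn.1, h2 n hn.2⟩⟩
  isOpen_sUnion := by
    intro S hS a ha
    obtain ⟨U, hU, haU⟩ := ha
    obtain ⟨F, hF, h⟩ := hS U hU a haU
    exact ⟨F, hF, fun n hn => ⟨U, hU, h n hn⟩⟩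

/-- `A⁺`: infinite sets not almost covered by finitely many members of `A`. -/
def posSet (A : Set (Set ℕ)) : Set (Set ℕ) :=
  {X | X.Infinite ∧ ∀ F : Finset (Set ℕ), ↑F ⊆ A → ¬(X \ ⋃ Y ∈ F, Y).Finite}

/-- `x` is an accumulation point of `S` in `ψ(A)`. -/
def AccPoint (A : Set (Set ℕ)) (x : ℕ ⊕ ↥A) (S : Set (ℕ ⊕ ↥A)) : Prop :=
  ∀ U : Set (ℕ ⊕ ↥A), @IsOpen _ (psiTop A) U → x ∈ U → ∃ y ∈ S ∩ U, y ≠ x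

/-- A filter on ω is an ultrafilter. -/
def IsUltra (F : Filter ℕ) : Prop := F.NeBot ∧ ∀ S : Set ℕ, S ∈ F ∨ Sᶜ ∈ F

lemma mem_complFilter {A : Set (Set ℕ)} {a s : Set ℕ} :
    s ∈ complFilter A a ↔ ∃ F : Finset (Set ℕ), ↑F ⊆ A \ {a} ∧ a \ ⋃ Y ∈ F, Y ⊆ s := by
  classical
  refine ⟨fun hs => ?_, fun ⟨F, hF, hsub⟩ =>
    Filter.mem_of_superset (Filter.mem_generate_of_mem ⟨F, hF, rfl⟩) hsub⟩
  induction hs with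
  | basic h => obtain ⟨F, hF, rfl⟩ := h; exact ⟨F, hF, subset_rfl⟩
  | univ => exact ⟨∅, by simp, Set.subset_univ _⟩
  | superset _ hst ih => obtain ⟨F, hF, hsub⟩ := ih; exact ⟨F, hF, hsub.trans hst⟩
  | inter _ _ ih₁ ih₂ =>
    obtain ⟨F, hF, hsub₁⟩ := ih₁
    obtain ⟨G, hG, hsub₂⟩ := ih₂
    refine ⟨F ∪ G, by simpa using Set.union_subset hF hG, ?_⟩
    rw [Finset.set_biUnion_union, ← Set.sdiff_inter_sdiff]
    exact Set.inter_subset_inter hsub₁ hsub₂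

lemma self_mem_complFilter (A : Set (Set ℕ)) (a : Set ℕ) : a ∈ complFilter A a :=
  mem_complFilter.mpr ⟨∅, by simp, Set.sdiff_subset⟩

lemma IsUltra.mem_of_frequently {f : Filter ℕ} (hf : IsUltra f) {s : Set ℕ}
    (hs : ∃ᶠ n in f, n ∈ s) : s ∈ f :=
  (hf.2 s).resolve_right hs

lemma isOpen_insert_inr_image_inl {A : Set (Set ℕ)} (a : ↥A) {F : Set ℕ}
    (hF : F ∈ complFilter A a.1) :
    @IsOpen _ (psiTop A) (insert (Sum.inr a) (Sum.inl '' F) : Set (ℕ ⊕ ↥A)) := by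
  rintro b (hb | ⟨_, _, hb⟩)
  · cases Sum.inr.inj hb
    exact ⟨F, hF, fun n hn => Or.inr ⟨n, hn, rfl⟩⟩
  · exact absurd hb Sum.inl_ne_inr

lemma not_accPoint_inl (A : Set (Set ℕ)) (n : ℕ) (S : Set (ℕ ⊕ ↥A)) :
    ¬ AccPoint A (Sum.inl n) S := fun h => by
  obtain ⟨y, ⟨_, rfl⟩, hy⟩ := h {Sum.inl n} (fun _ hb => absurd hb Sum.inr_ne_inl) rfl
  exact hy rfl

lemma accPoint_inr_iff_frequently {A : Set (Set ℕ)} (a : ↥A) (C : Set ℕ) :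
    AccPoint A (Sum.inr a) (Sum.inl '' C) ↔ ∃ᶠ n in complFilter A a.1, n ∈ C := by
  rw [Filter.frequently_iff]
  constructor
  · intro h F hF
    obtain ⟨_, ⟨⟨n, hnC, rfl⟩, hU⟩, _⟩ := h _ (isOpen_insert_inr_image_inl a hF) (Or.inl rfl)
    obtain ⟨m, hmF, hm⟩ := hU.resolve_left Sum.inl_ne_inr
    exact ⟨n, Sum.inl.inj hm ▸ hmF, hnC⟩
  · intro h U hU haU
    obtain ⟨F, hF, hFU⟩ := hU a haU
    obtain ⟨n, hnF, hnC⟩ := h hF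
    exact ⟨Sum.inl n, ⟨⟨n, hnC, rfl⟩, hFU n hnF⟩, Sum.inl_ne_inr⟩

lemma diff_biUnion_mem_posSet {A : Set (Set ℕ)} {C : Set ℕ} (hC : C ∈ posSet A)
    {G : Finset (Set ℕ)} (hG : ↑G ⊆ A) : C \ ⋃ Y ∈ G, Y ∈ posSet A := by
  classical
  refine ⟨hC.2 G hG, fun F hF hfin => hC.2 (G ∪ F) (by simpa using Set.union_subset hG hF) ?_⟩
  rwa [Finset.set_biUnion_union, ← Set.sdiff_sdiff]

namespace IdealIndependent

variable {A B : Set (Set ℕ)}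

lemma mem_posSet (hB : IdealIndependent B) (hAB : A ⊆ B) {C : Set ℕ} (hCB : C ∈ B)
    (hCA : C ∉ A) : C ∈ posSet A :=
  ⟨hB.1 C hCB, fun F hF => (hB.2 C hCB F fun _ hY =>
    ⟨hAB (hF hY), fun hYC => hCA (hYC ▸ hF hY)⟩).not_finite⟩

lemma notMem_complFilter (hB : IdealIndependent B) (hAB : A ⊆ B) {a C : Set ℕ}
    (ha : a ∈ A) (hCB : C ∈ B) (hCa : C ≠ a) : C ∉ complFilter A a := by
  classical
  intro hC
  obtain ⟨F, hF, hsub⟩ := mem_complFilter.mp hC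
  have hFB : ↑(insert C F) ⊆ B \ {a} := by
    rw [Finset.coe_insert]
    exact Set.insert_subset ⟨hCB, hCa⟩ (hF.trans (Set.sdiff_subset_sdiff_left hAB))
  obtain ⟨n, hna, hn⟩ := (hB.2 a (hAB ha) _ hFB).nonempty
  simp only [Finset.mem_insert, Set.mem_iUnion, exists_prop, not_exists, not_and,
    forall_eq_or_imp] at hn
  exact hn.1 (hsub ⟨hna, by simpa using hn.2⟩)

lemma insert_of_compl_mem (hA : IdealIndependent A) {C : Set ℕ} (hC : C ∈ posSet A)
    (hsmall : ∀ a ∈ A, Cᶜ ∈ complFilter A a) : IdealIndependent (insert C A) := by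
  classical
  refine ⟨Set.forall_mem_insert.mpr ⟨hC.1, hA.1⟩, Set.forall_mem_insert.mpr ⟨?_, ?_⟩⟩
  · intro F hF
    exact Set.not_finite.mp <| hC.2 F fun _ hY => (hF hY).1.resolve_left (hF hY).2
  · intro X hX F hF
    obtain ⟨G, hG, hsub⟩ := mem_complFilter.mp (hsmall X hX)
    have hFG : ↑(G ∪ F.erase C) ⊆ A \ {X} := by
      rw [Finset.coe_union]
      refine Set.union_subset hG fun Y hY => ?_
      obtain ⟨hYC, hYF⟩ := Finset.mem_erase.mp hY
      exact ⟨(hF hYF).1.resolve_left hYC, (hF hYF).2⟩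
    refine (hA.2 X hX _ hFG).mono ?_
    rintro n ⟨hnX, hn⟩
    simp only [Finset.mem_union, Finset.mem_erase, Set.mem_iUnion, exists_prop, not_exists,
      not_and, or_imp, forall_and] at hn
    have hnC : n ∉ C := hsub ⟨hnX, by simpa using hn.1⟩
    refine ⟨hnX, ?_⟩
    simp only [Set.mem_iUnion, exists_prop, not_exists, not_and]
    intro Y hYF hnY
    exact hn.2 Y ⟨fun hYC => hnC (hYC ▸ hnY), hYF⟩ hnY

end IdealIndependent

lemma MaximalIdealIndependent.exists_accPoint {A : Set (Set ℕ)}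
    (hmax : MaximalIdealIndependent A) {C : Set ℕ} (hC : C ∈ posSet A) :
    ∃ x : ℕ ⊕ ↥A, AccPoint A x (Sum.inl '' C) := by
  by_contra! hno
  have hsmall : ∀ a ∈ A, Cᶜ ∈ complFilter A a := fun a ha =>
    Filter.not_frequently.mp <|
      mt (accPoint_inr_iff_frequently ⟨a, ha⟩ C).mpr (hno (Sum.inr ⟨a, ha⟩))
  have hCA : C ∉ A := fun hCA => hC.2 {C} (by simpa using hCA) (by simp)
  have hAC := hmax.2 _ (hmax.1.insert_of_compl_mem hC hsmall) (Set.subset_insert C A)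
  exact hCA (hAC ▸ Set.mem_insert C A)

lemma IdealIndependent.maximal_of_exists_accPoint {A : Set (Set ℕ)} (hA : IdealIndependent A)
    (hfin : {B | B ∈ A ∧ ¬ IsUltra (complFilter A B)}.Finite)
    (hacc : ∀ C ∈ posSet A, ∃ x : ℕ ⊕ ↥A, AccPoint A x (Sum.inl '' C)) :
    MaximalIdealIndependent A := by
  refine ⟨hA, fun B hB hAB => ?_⟩
  by_contra hne
  obtain ⟨C, hCB, hCA⟩ := Set.exists_of_ssubset (hAB.ssubset_of_ne (Ne.symm hne))
  set G := hfin.toFinset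
  have hGA : ↑G ⊆ A := fun Y hY => (hfin.mem_toFinset.mp hY).1
  set D := C \ ⋃ Y ∈ G, Y
  obtain ⟨x, hx⟩ := hacc D (diff_biUnion_mem_posSet (hB.mem_posSet hAB hCB hCA) hGA)
  obtain ⟨a, rfl⟩ : ∃ a : ↥A, x = Sum.inr a := by
    cases x with
    | inl n => exact absurd hx (not_accPoint_inl A n _)
    | inr a => exact ⟨a, rfl⟩
  have hD := (accPoint_inr_iff_frequently a D).mp hx
  -- `D` avoids every non-ultra `a`, yet meets every set of `complFilter A a`, `a` among them.
  have hultra : IsUltra (complFilter A a.1) := by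
    by_contra hnu
    obtain ⟨n, ⟨-, hnG⟩, hna⟩ := (hD.and_eventually (self_mem_complFilter A a.1)).exists
    exact hnG (Set.mem_biUnion (hfin.mem_toFinset.mpr ⟨a.2, hnu⟩) hna)
  exact hB.notMem_complFilter hAB a.2 hCB (fun h => hCA (h ▸ a.2))
    (Filter.mem_of_superset (hultra.mem_of_frequently hD) Set.sdiff_subset)

/-- If `A` is maximal, every `C ∈ A⁺` has an accumulation point in `ψ(A)`; conversely,
if all but finitely many complemented filters are ultrafilters and every `C ∈ A⁺` has an
accumulation point, then `A` is maximal. -/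
theorem stmt17 (A : Set (Set ℕ)) (hA : IdealIndependent A) :
    (MaximalIdealIndependent A →
      ∀ C ∈ posSet A, ∃ x : ℕ ⊕ ↥A, AccPoint A x (Sum.inl '' C)) ∧
    (({B | B ∈ A ∧ ¬ IsUltra (complFilter A B)}.Finite ∧
      (∀ C ∈ posSet A, ∃ x : ℕ ⊕ ↥A, AccPoint A x (Sum.inl '' C))) →
      MaximalIdealIndependent A) :=
  ⟨fun hmax _ hC => hmax.exists_accPoint hC,
    fun ⟨hfin, hacc⟩ => hA.maximal_of_exists_accPoint hfin hacc⟩
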